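/- In a finite Büchi game with n positions, every winning strategy of Player 0 from v that is absorption-dominant from v is uniquely determined by its restriction to the nodes of the tree unraveling of depth at most n; consequently, the number of absorption-dominant winning strategies from v is finite. -/

import Mathlib

/-- A Büchi game: positions `V` partitioned into Player 0's positions `V0` and
Player 1's positions `V1`, edge relation `E` with every position having a
successor, and target set `F`. -/
structure BuchiGame (V : Type*) where
  V0 : Set V
  V1 : Set V
  E : V → V → Prop
  F : Set V
  cover : ∀ v, v ∈ V0 ∨ v ∈ V1
  disjoint : ∀ v, ¬(v ∈ V0 ∧ v ∈ V1)
  nonempty_succ : ∀ v, ∃ w, E v w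

/-- A strategy of Player 0 from `v0`, represented as a subtree of the tree
unraveling of the game: a set of finite paths from `v0` which is prefix-closed,
has a unique chosen successor at nodes ending in Player 0 positions, and all
successors at nodes ending in Player 1 positions. -/
structure BuchiStrategy {V : Type*} (G : BuchiGame V) (v0 : V) where
  tree : Set (List V)
  root_mem : [v0] ∈ tree
  isPath : ∀ ρ ∈ tree, ρ.head? = some v0 ∧ List.Chain' G.E ρ
  prefix_closed : ∀ (ρ : List V) (v : V), ρ ≠ [] → ρ ++ [v] ∈ tree → ρ ∈ tree
  choice0 : ∀ (ρ : List V) (v : V), ρ ++ [v] ∈ tree → v ∈ G.V0 →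
    ∃! w : V, ρ ++ [v, w] ∈ tree
  choice1 : ∀ (ρ : List V) (v : V), ρ ++ [v] ∈ tree → v ∈ G.V1 →
    ∀ w : V, G.E v w → ρ ++ [v, w] ∈ tree

namespace BuchiStrategy

variable {V : Type*} {G : BuchiGame V} {v0 : V}

/-- The number of occurrences (in `ℕ∞`) of the edge `e` in the strategy tree. -/
noncomputable def edgeCount (S : BuchiStrategy G v0) (e : V × V) : ℕ∞ :=
  {ρ : List V | ρ ++ [e.1, e.2] ∈ S.tree}.encard

/-- `S₁` absorbs `S₂`: every edge occurs in `S₁` at most as often as in `S₂`. -/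
def Absorbs (S₁ S₂ : BuchiStrategy G v0) : Prop :=
  ∀ e : V × V, S₁.edgeCount e ≤ S₂.edgeCount e

/-- `S₁` strictly absorbs `S₂`. -/
def StrictlyAbsorbs (S₁ S₂ : BuchiStrategy G v0) : Prop :=
  Absorbs S₁ S₂ ∧ ∃ e : V × V, S₁.edgeCount e < S₂.edgeCount e

/-- A strategy is absorption-dominant from `v0` if no strategy strictly absorbs it. -/
def AbsorptionDominant (S : BuchiStrategy G v0) : Prop :=
  ∀ S' : BuchiStrategy G v0, ¬ StrictlyAbsorbs S' S

/-- A strategy is positional if all occurrences of any Player 0 position have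
the same chosen successor. -/
def Positional (S : BuchiStrategy G v0) : Prop :=
  ∀ v ∈ G.V0, ∀ (ρ ρ' : List V) (w w' : V),
    ρ ++ [v, w] ∈ S.tree → ρ' ++ [v, w'] ∈ S.tree → w = w'

/-- An infinite play consistent with the strategy: all finite prefixes lie in
the strategy tree. -/
def ConsistentPlay (S : BuchiStrategy G v0) (f : ℕ → V) : Prop :=
  ∀ n : ℕ, (List.range (n + 1)).map f ∈ S.tree

/-- A strategy is winning if every consistent play visits `F` infinitely often. -/
def Winning (S : BuchiStrategy G v0) : Prop :=
  ∀ f : ℕ → V, S.ConsistentPlay f → ∀ n : ℕ, ∃ m : ℕ, n ≤ m ∧ f m ∈ G.F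

end BuchiStrategy

/-!
Let `S` be absorption-dominant and let `π ⊏ τ` be nodes of `S` ending in the same position.
Redirecting `S` along a map `J` of its nodes that preserves the last position (play at `h` as
`S` plays at the node reached by applying `J` after every move) gives a strategy that absorbs
`S` as soon as the induced map on nodes is injective on the occurrences of every edge that `S`
uses finitely often, so dominance forbids it to lose an occurrence of such an edge. Three
redirections are used: skipping from `π` to `τ` shows that edges taken below `π` but off `τ`
are taken infinitely often; pumping from `τ` back to `π` then shows that every edge taken below
`π` is taken infinitely often; finally, committing every visit to a Player 0 position `y` to
one choice made below `π` shows that `S` makes the same choice at all visits to `y` below `π`.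
Hence `S` looks the same below `π` and below `τ`, and since every branch longer than `n + 1`
contains such a repetition within depth `n + 1`, `S` is determined by its nodes of depth at
most `n + 1`.
-/

theorem exists_prefixes_getLast?_eq_of_card_lt_length {V : Type*} [Fintype V] {ρ : List V}
    (h : Fintype.card V < ρ.length) :
    ∃ π τ : List V, π <+: τ ∧ τ <+: ρ ∧ π.length < τ.length ∧
      τ.length ≤ Fintype.card V + 1 ∧ π.getLast? = τ.getLast? := by
  obtain ⟨a, b, hab, heq⟩ := Fintype.exists_ne_map_eq_of_card_lt
    (fun k : Fin (Fintype.card V + 1) => ρ[k.val]'(by omega)) (by simp)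
  wlog hlt : a < b generalizing a b
  · exact this b a hab.symm heq.symm (lt_of_le_of_ne (not_lt.1 hlt) hab.symm)
  refine ⟨ρ.take (a + 1), ρ.take (b + 1), List.take_prefix_take_left (by omega),
    List.take_prefix _ _, by simp; omega, by simp; omega, ?_⟩
  simp only [List.getLast?_take, Nat.add_one_ne_zero, if_false, Nat.add_sub_cancel]
  rw [List.getElem?_eq_getElem (by omega), List.getElem?_eq_getElem (by omega)]
  exact congrArg _ heq

namespace BuchiStrategy

variable {V : Type*} {G : BuchiGame V} {v0 : V} (S : BuchiStrategy G v0)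

theorem ne_nil_of_mem {ρ : List V} (h : ρ ∈ S.tree) : ρ ≠ [] := by
  rintro rfl
  simpa using (S.isPath _ h).1

theorem mem_of_prefix {χ ρ : List V} (hχ : χ ≠ []) (hp : χ <+: ρ) (hρ : ρ ∈ S.tree) :
    χ ∈ S.tree := by
  obtain ⟨t, rfl⟩ := hp
  induction t using List.reverseRecOn with
  | nil => simpa using hρ
  | append_singleton t a ih =>
    rw [← List.append_assoc] at hρ
    exact ih (S.prefix_closed _ _ (by simp [hχ]) hρ)

theorem eq_of_singleton_mem {w : V} (h : [w] ∈ S.tree) : w = v0 := by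
  simpa using (S.isPath _ h).1

theorem edge_of_append_singleton_mem {h : List V} {u w : V} (hw : h ++ [w] ∈ S.tree)
    (hu : h.getLast? = some u) : G.E u w :=
  (List.isChain_append.1 (S.isPath _ hw).2).2.2 u hu w rfl

theorem existsUnique_append_singleton_mem {h : List V} {u : V} (hh : h ∈ S.tree)
    (hu : h.getLast? = some u) (hu0 : u ∈ G.V0) : ∃! w, h ++ [w] ∈ S.tree := by
  rw [← List.dropLast_append_getLast? u hu] at hh ⊢
  simpa using S.choice0 _ _ hh hu0

theorem append_singleton_mem_iff_of_V1 {h : List V} {u : V} (hh : h ∈ S.tree)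
    (hu : h.getLast? = some u) (hu1 : u ∈ G.V1) (w : V) : h ++ [w] ∈ S.tree ↔ G.E u w := by
  refine ⟨fun hw => S.edge_of_append_singleton_mem hw hu, fun hE => ?_⟩
  rw [← List.dropLast_append_getLast? u hu] at hh ⊢
  simpa using S.choice1 _ _ hh hu1 w hE

def edgeNodes (e : V × V) : Set (List V) :=
  {h | h.getLast? = some e.1 ∧ h ++ [e.2] ∈ S.tree}

theorem edgeCount_eq_encard_edgeNodes (e : V × V) :
    S.edgeCount e = (S.edgeNodes e).encard := by
  have himage : S.edgeNodes e = (· ++ [e.1]) '' {ρ | ρ ++ [e.1, e.2] ∈ S.tree} := by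
    ext h
    constructor
    · rintro ⟨hu, hh⟩
      rw [← List.dropLast_append_getLast? _ hu] at hh
      exact ⟨h.dropLast, by simpa using hh, List.dropLast_append_getLast? _ hu⟩
    · rintro ⟨ρ, hρ, rfl⟩
      exact ⟨by simp, by simpa using hρ⟩
  rw [himage, (List.append_left_injective _).encard_image]
  rfl

theorem mem_of_mem_edgeNodes {e : V × V} {h : List V} (hh : h ∈ S.edgeNodes e) : h ∈ S.tree :=
  S.prefix_closed _ _ (by rintro rfl; simp [edgeNodes] at hh) hh.2

theorem eq_of_mem_edgeNodes_of_V0 {h : List V} {y z z' : V} (hy : y ∈ G.V0)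
    (hz : h ∈ S.edgeNodes (y, z)) (hz' : h ∈ S.edgeNodes (y, z')) : z = z' :=
  (S.existsUnique_append_singleton_mem (S.mem_of_mem_edgeNodes hz) hz.1 hy).unique hz.2 hz'.2

/-- The node of `S` imitated after the moves `l`: `J` redirects after every move. -/
def redirectState (J : List V → List V) (l : List V) : List V :=
  l.foldl (fun s a => J (s ++ [a])) []

@[simp] theorem redirectState_nil (J : List V → List V) : redirectState J [] = [] := rfl

theorem redirectState_append_singleton (J : List V → List V) (h : List V) (a : V) :
    redirectState J (h ++ [a]) = J (redirectState J h ++ [a]) :=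
  List.foldl_concat _ _ _ _

def IsRedirection (J : List V → List V) : Prop :=
  ∀ s ∈ S.tree, J s ∈ S.tree ∧ (J s).getLast? = s.getLast?

def Tracks (J : List V → List V) (ρ : List V) : Prop :=
  ∀ h w, h ++ [w] <+: ρ → redirectState J h ++ [w] ∈ S.tree

variable {S} {J : List V → List V}

theorem tracks_nil : S.Tracks J [] := fun h w hp => by simpa using hp.length_le

theorem tracks_append_singleton {ρ : List V} {w : V} :
    S.Tracks J (ρ ++ [w]) ↔ S.Tracks J ρ ∧ redirectState J ρ ++ [w] ∈ S.tree := by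
  refine ⟨fun hρ => ⟨fun h w' hp => hρ h w' (hp.trans (List.prefix_append _ _)),
    hρ ρ w List.prefix_rfl⟩, fun ⟨hρ, hw⟩ h w' hp => ?_⟩
  rcases List.prefix_concat_iff.1 hp with heq | hp
  · obtain ⟨rfl, rfl⟩ : h = ρ ∧ w' = w := by simpa using heq
    exact hw
  · exact hρ h w' hp

theorem head?_eq_of_tracks {ρ : List V} (hρ : S.Tracks J ρ) (hne : ρ ≠ []) :
    ρ.head? = some v0 := by
  obtain ⟨a, t, rfl⟩ := List.exists_cons_of_ne_nil hne
  have ha : [a] ∈ S.tree := by simpa using hρ [] a (by simp)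
  simp [S.eq_of_singleton_mem ha]

theorem IsRedirection.redirectState_mem (hJ : S.IsRedirection J) {ρ : List V}
    (hρ : S.Tracks J ρ) (hne : ρ ≠ []) :
    redirectState J ρ ∈ S.tree ∧ (redirectState J ρ).getLast? = ρ.getLast? := by
  rcases ρ.eq_nil_or_concat' with rfl | ⟨h, a, rfl⟩
  · exact absurd rfl hne
  rw [redirectState_append_singleton]
  simpa using hJ _ (tracks_append_singleton.1 hρ).2

theorem IsRedirection.isChain_of_tracks (hJ : S.IsRedirection J) {ρ : List V}
    (hρ : S.Tracks J ρ) : List.IsChain G.E ρ := by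
  induction ρ using List.reverseRecOn with
  | nil => exact List.IsChain.nil
  | append_singleton h a ih =>
    obtain ⟨hh, ha⟩ := tracks_append_singleton.1 hρ
    refine (ih hh).append (List.isChain_singleton a) fun x hx y hy => ?_
    obtain rfl : a = y := by simpa using hy
    have hne : h ≠ [] := by rintro rfl; simp at hx
    exact S.edge_of_append_singleton_mem ha (by rw [(hJ.redirectState_mem hh hne).2]; exact hx)

theorem tracks_append_pair_iff {ρ : List V} {u : V} (hρ : S.Tracks J (ρ ++ [u])) (w : V) :
    (ρ ++ [u, w] ≠ [] ∧ S.Tracks J (ρ ++ [u, w])) ↔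
      redirectState J (ρ ++ [u]) ++ [w] ∈ S.tree := by
  rw [show ρ ++ [u, w] = ρ ++ [u] ++ [w] by simp, tracks_append_singleton]
  simp [hρ]

variable (S) in
/-- The strategy that plays at `ρ` as `S` plays at `redirectState J ρ`. -/
def redirect (hJ : S.IsRedirection J) : BuchiStrategy G v0 where
  tree := {ρ | ρ ≠ [] ∧ S.Tracks J ρ}
  root_mem := ⟨by simp, by
    rw [← List.nil_append [v0], tracks_append_singleton]
    exact ⟨tracks_nil, by simpa using S.root_mem⟩⟩
  isPath ρ hρ := ⟨head?_eq_of_tracks hρ.2 hρ.1, hJ.isChain_of_tracks hρ.2⟩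
  prefix_closed ρ _ hne hρ := ⟨hne, (tracks_append_singleton.1 hρ.2).1⟩
  choice0 ρ u hρ hu := by
    obtain ⟨hmem, hlast⟩ := hJ.redirectState_mem hρ.2 hρ.1
    exact (existsUnique_congr (tracks_append_pair_iff hρ.2)).2
      (S.existsUnique_append_singleton_mem hmem (by simpa using hlast) hu)
  choice1 ρ u hρ hu w hE := by
    obtain ⟨hmem, hlast⟩ := hJ.redirectState_mem hρ.2 hρ.1
    exact (tracks_append_pair_iff hρ.2 w).2
      ((S.append_singleton_mem_iff_of_V1 hmem (by simpa using hlast) hu w).2 hE)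

theorem mapsTo_redirectState_edgeNodes (hJ : S.IsRedirection J) (e : V × V) :
    Set.MapsTo (redirectState J) ((S.redirect hJ).edgeNodes e) (S.edgeNodes e) := by
  rintro h ⟨hu, -, htr⟩
  have hne : h ≠ [] := by rintro rfl; simp at hu
  obtain ⟨htr, hw⟩ := tracks_append_singleton.1 htr
  exact ⟨by rw [(hJ.redirectState_mem htr hne).2, hu], hw⟩

theorem absorbs_redirect (hJ : S.IsRedirection J)
    (hinj : ∀ e, S.edgeCount e ≠ ⊤ → Set.InjOn (redirectState J) ((S.redirect hJ).edgeNodes e)) :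
    (S.redirect hJ).Absorbs S := by
  intro e
  by_cases hfin : S.edgeCount e = ⊤
  · exact hfin ▸ le_top
  rw [edgeCount_eq_encard_edgeNodes, edgeCount_eq_encard_edgeNodes]
  exact Set.encard_le_encard_of_injOn (mapsTo_redirectState_edgeNodes hJ e) (hinj e hfin)

theorem AbsorptionDominant.edgeCount_redirect (hS : S.AbsorptionDominant)
    (hJ : S.IsRedirection J)
    (hinj : ∀ e, S.edgeCount e ≠ ⊤ → Set.InjOn (redirectState J) ((S.redirect hJ).edgeNodes e))
    (e : V × V) : (S.redirect hJ).edgeCount e = S.edgeCount e :=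
  (absorbs_redirect hJ hinj e).eq_of_not_lt fun hlt => hS _ ⟨absorbs_redirect hJ hinj, e, hlt⟩

theorem AbsorptionDominant.surjOn_redirectState (hS : S.AbsorptionDominant)
    (hJ : S.IsRedirection J)
    (hinj : ∀ e, S.edgeCount e ≠ ⊤ → Set.InjOn (redirectState J) ((S.redirect hJ).edgeNodes e))
    {e : V × V} (hfin : S.edgeCount e ≠ ⊤) :
    Set.SurjOn (redirectState J) ((S.redirect hJ).edgeNodes e) (S.edgeNodes e) := by
  have hmaps := mapsTo_redirectState_edgeNodes hJ e
  have hfinite : (S.edgeNodes e).Finite := by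
    rwa [← Set.encard_ne_top_iff, ← edgeCount_eq_encard_edgeNodes]
  have himage := (hfinite.subset hmaps.image_subset).eq_of_subset_of_encard_le
    hmaps.image_subset (by
      rw [(hinj e hfin).encard_image, ← edgeCount_eq_encard_edgeNodes,
        ← edgeCount_eq_encard_edgeNodes, hS.edgeCount_redirect hJ hinj])
  exact himage.symm.subset

open Classical in
noncomputable def jump (P : Set (List V)) (χ s : List V) : List V :=
  if s ∈ P then χ else s

section Jump

variable {P : Set (List V)} {χ π τ : List V}

theorem jump_of_mem {s : List V} (h : s ∈ P) : jump P χ s = χ := by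
  simp [jump, h]

theorem jump_of_not_mem {s : List V} (h : s ∉ P) : jump P χ s = s := by
  simp [jump, h]

variable (S) in
theorem isRedirection_jump (hχ : χ ∈ S.tree) (hP : ∀ s ∈ P, s.getLast? = χ.getLast?) :
    S.IsRedirection (jump P χ) := by
  intro s hs
  by_cases h : s ∈ P
  · rw [jump_of_mem h, hP s h]
    exact ⟨hχ, rfl⟩
  · rw [jump_of_not_mem h]
    exact ⟨hs, rfl⟩

theorem redirectState_jump_eq_or_prefix (h : List V) :
    redirectState (jump P χ) h = h ∨ χ <+: redirectState (jump P χ) h := by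
  induction h using List.reverseRecOn with
  | nil => exact .inl rfl
  | append_singleton h a ih =>
    rw [redirectState_append_singleton]
    by_cases hP : redirectState (jump P χ) h ++ [a] ∈ P
    · exact .inr (by rw [jump_of_mem hP])
    · rw [jump_of_not_mem hP]
      rcases ih with ih | ih
      · exact .inl (by rw [ih])
      · exact .inr (ih.trans (List.prefix_append _ _))

theorem redirectState_jump_singleton_of_not_prefix {h : List V} (hπ : ¬ π <+: h) :
    redirectState (jump {π} τ) h = h := by
  induction h using List.reverseRecOn with
  | nil => rfl
  | append_singleton h a ih =>
    rw [redirectState_append_singleton, ih fun hp => hπ (hp.trans (List.prefix_append _ _)),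
      jump_of_not_mem]
    rintro rfl
    exact hπ List.prefix_rfl

theorem redirectState_jump_singleton_of_prefix (hπ : π ≠ []) (hlt : π.length < τ.length)
    {h : List V} (hp : π <+: h) : redirectState (jump {π} τ) h = τ ++ h.drop π.length := by
  induction h using List.reverseRecOn with
  | nil => exact absurd (List.prefix_nil.1 hp) hπ
  | append_singleton h a ih =>
    rw [redirectState_append_singleton]
    rcases List.prefix_concat_iff.1 hp with rfl | hp
    · rw [redirectState_jump_singleton_of_not_prefix fun hp => by simpa using hp.length_le,
        jump_of_mem (Set.mem_singleton _)]
      simp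
    · rw [ih hp, jump_of_not_mem, List.drop_append_of_le_length hp.length_le, List.append_assoc]
      intro heq
      have := congrArg List.length (Set.mem_singleton_iff.1 heq)
      simp at this
      omega

theorem redirectState_jump_singleton_injective (hπ : π ≠ []) (hπτ : π <+: τ)
    (hlt : π.length < τ.length) : Function.Injective (redirectState (jump {π} τ)) := by
  have hprefix : ∀ h, π <+: redirectState (jump {π} τ) h ↔ π <+: h := fun h => by
    by_cases hp : π <+: h
    · rw [redirectState_jump_singleton_of_prefix hπ hlt hp]
      exact iff_of_true (hπτ.trans (List.prefix_append _ _)) hp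
    · rw [redirectState_jump_singleton_of_not_prefix hp]
  intro h₁ h₂ heq
  by_cases hp₁ : π <+: h₁
  · have hp₂ : π <+: h₂ := (hprefix h₂).1 (heq ▸ (hprefix h₁).2 hp₁)
    rw [redirectState_jump_singleton_of_prefix hπ hlt hp₁,
      redirectState_jump_singleton_of_prefix hπ hlt hp₂] at heq
    obtain ⟨t₁, rfl⟩ := hp₁
    obtain ⟨t₂, rfl⟩ := hp₂
    simpa using heq
  · have hp₂ : ¬ π <+: h₂ := fun hp₂ => hp₁ ((hprefix h₁).1 (heq ▸ (hprefix h₂).2 hp₂))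
    rwa [redirectState_jump_singleton_of_not_prefix hp₁,
      redirectState_jump_singleton_of_not_prefix hp₂] at heq

theorem not_prefix_redirectState_jump_singleton (hlt : π.length < τ.length) (h : List V) :
    ¬ τ <+: redirectState (jump {τ} π) h := by
  induction h using List.reverseRecOn with
  | nil => exact fun hp => by simpa using hlt.trans_le hp.length_le
  | append_singleton h a ih =>
    rw [redirectState_append_singleton]
    by_cases hτ : redirectState (jump {τ} π) h ++ [a] = τ
    · rw [jump_of_mem (Set.mem_singleton_iff.2 hτ)]
      exact fun hp => absurd hp.length_le (by omega)
    · rw [jump_of_not_mem (mt Set.mem_singleton_iff.1 hτ)]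
      intro hp
      rcases List.prefix_concat_iff.1 hp with heq | hp
      · exact hτ heq.symm
      · exact ih hp

end Jump

variable (S) in
structure IsRepetition (π τ : List V) : Prop where
  mem : τ ∈ S.tree
  isPrefix : π <+: τ
  length_lt : π.length < τ.length
  getLast?_eq : π.getLast? = τ.getLast?

namespace IsRepetition

variable {π τ : List V} (hS : S.AbsorptionDominant) (hr : S.IsRepetition π τ)
include hr

theorem ne_nil : π ≠ [] := by
  rintro rfl
  exact S.ne_nil_of_mem hr.mem (List.getLast?_eq_none_iff.1 hr.getLast?_eq.symm)

theorem mem_left : π ∈ S.tree :=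
  S.mem_of_prefix hr.ne_nil hr.isPrefix hr.mem

include hS

theorem edgeCount_eq_top_of_not_prefix {e : V × V} {h₀ : List V} (h₀e : h₀ ∈ S.edgeNodes e)
    (hπ : π <+: h₀) (hτ : ¬ τ <+: h₀) : S.edgeCount e = ⊤ := by
  by_contra hfin
  have hJ : S.IsRedirection (jump {π} τ) := S.isRedirection_jump hr.mem fun s hs => by
    rw [Set.mem_singleton_iff.1 hs, hr.getLast?_eq]
  have hinj := redirectState_jump_singleton_injective hr.ne_nil hr.isPrefix hr.length_lt
  obtain ⟨h, -, hh₀⟩ := hS.surjOn_redirectState hJ (fun _ _ => hinj.injOn) hfin h₀e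
  by_cases hp : π <+: h
  · rw [redirectState_jump_singleton_of_prefix hr.ne_nil hr.length_lt hp] at hh₀
    exact hτ (hh₀ ▸ List.prefix_append _ _)
  · rw [redirectState_jump_singleton_of_not_prefix hp] at hh₀
    exact hp (hh₀ ▸ hπ)

theorem edgeCount_eq_top {e : V × V} {h₀ : List V} (h₀e : h₀ ∈ S.edgeNodes e)
    (hπ : π <+: h₀) : S.edgeCount e = ⊤ := by
  by_cases hτ : τ <+: h₀
  swap
  · exact hr.edgeCount_eq_top_of_not_prefix hS h₀e hπ hτ
  by_contra hfin
  have hJ : S.IsRedirection (jump {τ} π) := S.isRedirection_jump hr.mem_left fun s hs => by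
    rw [Set.mem_singleton_iff.1 hs, hr.getLast?_eq]
  -- pumping the loop from `π` to `τ` only creates nodes below `π` and off `τ`
  have hid : ∀ e, S.edgeCount e ≠ ⊤ →
      Set.EqOn (redirectState (jump {τ} π)) id ((S.redirect hJ).edgeNodes e) := by
    intro e hfin h hh
    refine (redirectState_jump_eq_or_prefix h).resolve_right fun hπh => hfin ?_
    exact hr.edgeCount_eq_top_of_not_prefix hS (mapsTo_redirectState_edgeNodes hJ e hh) hπh
      (not_prefix_redirectState_jump_singleton hr.length_lt h)
  have hinj e hfin := Set.injOn_id _ |>.congr (hid e hfin).symm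
  obtain ⟨h, hh, hh₀⟩ := hS.surjOn_redirectState hJ hinj hfin h₀e
  refine not_prefix_redirectState_jump_singleton hr.length_lt h ?_
  rwa [hh₀]

theorem eq_of_mem_edgeNodes {y z z' : V} (hy : y ∈ G.V0) {h h' : List V}
    (hh : h ∈ S.edgeNodes (y, z)) (hπh : π <+: h) (hh' : h' ∈ S.edgeNodes (y, z'))
    (hπh' : π <+: h') : z = z' := by
  by_contra hne
  have hJ : S.IsRedirection (jump {s | s.getLast? = some y} h) :=
    S.isRedirection_jump (S.mem_of_mem_edgeNodes hh) fun s hs => hs.trans hh.1.symm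
  have hid : ∀ e, S.edgeCount e ≠ ⊤ →
      Set.EqOn (redirectState (jump {s | s.getLast? = some y} h)) id
        ((S.redirect hJ).edgeNodes e) := by
    intro e hfin k hk
    refine (redirectState_jump_eq_or_prefix k).resolve_right fun hhk => hfin ?_
    exact hr.edgeCount_eq_top hS (mapsTo_redirectState_edgeNodes hJ e hk) (hπh.trans hhk)
  have hinj e hfin := Set.injOn_id _ |>.congr (hid e hfin).symm
  -- at every visit to `y` the redirected strategy chooses `z`, so it never takes `(y, z')`
  have hempty : (S.redirect hJ).edgeNodes (y, z') = ∅ := by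
    refine Set.eq_empty_of_forall_notMem fun k hk => hne ?_
    have hk' := mapsTo_redirectState_edgeNodes hJ _ hk
    rw [← List.dropLast_append_getLast? y hk.1, redirectState_append_singleton,
      jump_of_mem (by simp)] at hk'
    exact S.eq_of_mem_edgeNodes_of_V0 hy hh hk'
  have hcount := hS.edgeCount_redirect hJ hinj (y, z')
  rw [edgeCount_eq_encard_edgeNodes, hempty, Set.encard_empty,
    hr.edgeCount_eq_top hS hh' hπh'] at hcount
  exact ENat.zero_ne_top hcount

theorem append_singleton_mem_of_mem {h h' : List V} {c : V} (hh' : h' ∈ S.tree)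
    (hπh : π <+: h) (hπh' : π <+: h') (hlast : h.getLast? = h'.getLast?)
    (hc : h ++ [c] ∈ S.tree) : h' ++ [c] ∈ S.tree := by
  obtain ⟨y, hy⟩ := Option.ne_none_iff_exists'.1
    (mt List.getLast?_eq_none_iff.1 (S.ne_nil_of_mem hh'))
  rcases G.cover y with hy0 | hy1
  · obtain ⟨z, hz, -⟩ := S.existsUnique_append_singleton_mem hh' hy hy0
    rwa [hr.eq_of_mem_edgeNodes hS hy0 ⟨hlast.trans hy, hc⟩ hπh ⟨hy, hz⟩ hπh']
  · exact (S.append_singleton_mem_iff_of_V1 hh' hy hy1 c).2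
      (S.edge_of_append_singleton_mem hc (hlast.trans hy))

theorem append_mem_iff (r : List V) : π ++ r ∈ S.tree ↔ τ ++ r ∈ S.tree := by
  induction r using List.reverseRecOn with
  | nil => simpa using iff_of_true hr.mem_left hr.mem
  | append_singleton r c ih =>
    simp only [← List.append_assoc]
    by_cases hπr : π ++ r ∈ S.tree
    · have hlast : (π ++ r).getLast? = (τ ++ r).getLast? := by
        rw [List.getLast?_append, List.getLast?_append, hr.getLast?_eq]
      have hπτr : π <+: τ ++ r := hr.isPrefix.trans (List.prefix_append _ _)
      exact ⟨hr.append_singleton_mem_of_mem hS (ih.1 hπr) (List.prefix_append _ _) hπτr hlast,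
        hr.append_singleton_mem_of_mem hS hπr hπτr (List.prefix_append _ _) hlast.symm⟩
    · refine iff_of_false (fun h => hπr (S.prefix_closed _ _ (by simp [hr.ne_nil]) h))
        fun h => hπr (ih.2 (S.prefix_closed _ _ (by simp [S.ne_nil_of_mem hr.mem]) h))

end IsRepetition

theorem AbsorptionDominant.tree_subset [Fintype V] {S' : BuchiStrategy G v0}
    (hS : S.AbsorptionDominant) (hS' : S'.AbsorptionDominant)
    (h : {ρ ∈ S.tree | ρ.length ≤ Fintype.card V + 1} ⊆
      {ρ ∈ S'.tree | ρ.length ≤ Fintype.card V + 1}) :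
    S.tree ⊆ S'.tree := by
  intro ρ hρ
  induction hlen : ρ.length using Nat.strong_induction_on generalizing ρ with
  | _ L ih =>
  by_cases hshort : ρ.length ≤ Fintype.card V + 1
  · exact (h ⟨hρ, hshort⟩).1
  obtain ⟨π, τ, hπτ, ⟨r, rfl⟩, hlt, hτn, hlast⟩ :=
    exists_prefixes_getLast?_eq_of_card_lt_length (by omega : Fintype.card V < ρ.length)
  have hr : S.IsRepetition π τ :=
    ⟨S.mem_of_prefix (List.ne_nil_of_length_pos (by omega)) (List.prefix_append _ _) hρ,
      hπτ, hlt, hlast⟩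
  have hr' : S'.IsRepetition π τ := { hr with mem := (h ⟨hr.mem, hτn⟩).1 }
  have hπr : π ++ r ∈ S'.tree :=
    ih _ (by simp at hlen ⊢; omega) ((hr.append_mem_iff hS r).2 hρ) rfl
  exact (hr'.append_mem_iff hS' r).1 hπr

end BuchiStrategy

open BuchiStrategy in
/-- In a finite Büchi game with `n` positions, every absorption-dominant winning
strategy from `v` is uniquely determined by its restriction to nodes of depth
at most `n` in the tree unraveling; consequently there are only finitely many
absorption-dominant winning strategies from `v`. -/
theorem absorption_dominant_determined_by_depth {V : Type*} [Fintype V]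
    (G : BuchiGame V) (v : V) :
    (∀ S S' : BuchiStrategy G v,
      S.Winning → S.AbsorptionDominant → S'.Winning → S'.AbsorptionDominant →
      {ρ ∈ S.tree | ρ.length ≤ Fintype.card V + 1} =
        {ρ ∈ S'.tree | ρ.length ≤ Fintype.card V + 1} →
      S.tree = S'.tree) ∧
    {T : Set (List V) | ∃ S : BuchiStrategy G v,
      S.Winning ∧ S.AbsorptionDominant ∧ S.tree = T}.Finite := by
  have determined (S S' : BuchiStrategy G v) (hS : S.AbsorptionDominant)
      (hS' : S'.AbsorptionDominant)
      (heq : {ρ ∈ S.tree | ρ.length ≤ Fintype.card V + 1} =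
        {ρ ∈ S'.tree | ρ.length ≤ Fintype.card V + 1}) : S.tree = S'.tree :=
    (hS.tree_subset hS' heq.subset).antisymm (hS'.tree_subset hS heq.symm.subset)
  refine ⟨fun S S' _ hS _ hS' => determined S S' hS hS', ?_⟩
  refine Set.Finite.of_finite_image
    (f := fun T => {ρ ∈ T | ρ.length ≤ Fintype.card V + 1}) ?_ ?_
  · refine (List.finite_length_le V (Fintype.card V + 1)).finite_subsets.subset ?_
    rintro _ ⟨T, -, rfl⟩ ρ hρ
    exact hρ.2
  · rintro _ ⟨S, -, hS, rfl⟩ _ ⟨S', -, hS', rfl⟩ heq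
    exact determined S S' hS hS' heq
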